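/- arXiv:1609.06597 — 7 statements merged into one kernel-verified Lean document; each statement's English description precedes it below -/
import Mathlib

section
/- Let λ ≠ 0 and let f_λ : ℤ → ℝ be defined by f_λ(x) = e^{-α_λ|x|}/ν_λ for λ > 0 and f_λ(x) = (-1)^x e^{-α_λ|x|}/ν_λ for λ < 0, where α_λ = log(√(1+λ²)+|λ|) and ν_λ² = √(1+λ²)/|λ|. Then f_λ ∈ ℓ²(ℤ) and ‖f_λ‖ = 1. -/
/-!
Squaring removes the sign `(-1)^x`, so `f_λ(x)² = q^|x| / C` with `s = √(1+λ²) + |λ|`,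
`q = s⁻²` and `C = √(1+λ²)/|λ|`. The two-sided geometric series gives
`∑ q^|x| = (1+q)/(1-q) = (s²+1)/(s²-1)`, and `s² ± 1` factor as `2√(1+λ²)·s` and `2|λ|·s`,
so the sum is exactly `C`.
-/

noncomputable def magneticEigenfunction (lam : ℝ) (x : ℤ) : ℝ :=
  (if 0 < lam then 1 else (-1 : ℝ) ^ x) *
    Real.exp (-(Real.log (Real.sqrt (1 + lam ^ 2) + |lam|)) * |x|) /
      Real.sqrt (Real.sqrt (1 + lam ^ 2) / |lam|)

open Real

theorem hasSum_pow_natAbs {q : ℝ} (hq : |q| < 1) :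
    HasSum (fun n : ℤ => q ^ n.natAbs) ((1 + q) / (1 - q)) := by
  have hgeom := hasSum_geometric_of_abs_lt_one hq
  have h1q : 1 - q ≠ 0 := by linarith [le_abs_self q]
  rw [show (1 + q) / (1 - q) = (1 - q)⁻¹ + (1 - q)⁻¹ - 1 by field_simp; ring]
  simpa using HasSum.of_nat_of_neg (f := fun n : ℤ => q ^ n.natAbs) (by simpa using hgeom)
    (by simpa using hgeom)

theorem exp_neg_log_mul_intCast_abs {s : ℝ} (hs : 0 < s) (n : ℤ) :
    exp (-log s * |n|) = s⁻¹ ^ n.natAbs := by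
  rw [Int.abs_eq_natAbs, Int.cast_natCast, mul_comm, ← log_inv,
    ← log_rpow (inv_pos.2 hs), exp_log (by positivity), rpow_natCast]

theorem ite_one_neg_one_zpow_sq (p : Prop) [Decidable p] (x : ℤ) :
    (if p then 1 else (-1 : ℝ) ^ x) ^ 2 = 1 := by
  split_ifs
  · exact one_pow 2
  · rw [← zpow_natCast, ← zpow_mul, mul_comm, zpow_mul]
    norm_num

theorem magneticEigenfunction_sq (lam : ℝ) (x : ℤ) :
    magneticEigenfunction lam x ^ 2 =
      ((√(1 + lam ^ 2) + |lam|)⁻¹ ^ 2) ^ x.natAbs / (√(1 + lam ^ 2) / |lam|) := by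
  have hs : 0 < √(1 + lam ^ 2) + |lam| := by positivity
  rw [magneticEigenfunction, div_pow, mul_pow, ite_one_neg_one_zpow_sq, one_mul,
    exp_neg_log_mul_intCast_abs hs, pow_right_comm, sq_sqrt (by positivity)]

theorem one_add_inv_sq_div_one_sub_inv_sq {a b : ℝ} (ha : 0 ≤ a) (hb : 0 < b)
    (hab : a ^ 2 = 1 + b ^ 2) :
    (1 + (a + b)⁻¹ ^ 2) / (1 - (a + b)⁻¹ ^ 2) = a / b := by
  have hs : 0 < a + b := by positivity
  calc (1 + (a + b)⁻¹ ^ 2) / (1 - (a + b)⁻¹ ^ 2) = ((a + b) ^ 2 + 1) / ((a + b) ^ 2 - 1) := by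
        field_simp
    _ = a * (2 * (a + b)) / (b * (2 * (a + b))) := by
        congr 1
        · linear_combination -hab
        · linear_combination hab
    _ = a / b := mul_div_mul_right a b (by positivity)

theorem magneticEigenfunction_normalized (lam : ℝ) (hlam : lam ≠ 0) :
    Summable (fun x : ℤ => (magneticEigenfunction lam x) ^ 2) ∧
    ∑' x : ℤ, (magneticEigenfunction lam x) ^ 2 = 1 := by
  have ha : 1 ≤ √(1 + lam ^ 2) := one_le_sqrt.2 (by nlinarith)
  have hb : 0 < |lam| := abs_pos.2 hlam
  have hab : √(1 + lam ^ 2) ^ 2 = 1 + |lam| ^ 2 := by rw [sq_sqrt (by positivity), sq_abs]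
  have hq : |(√(1 + lam ^ 2) + |lam|)⁻¹ ^ 2| < 1 := by
    rw [abs_pow, abs_inv, abs_of_pos (by positivity)]
    exact pow_lt_one₀ (by positivity) (inv_lt_one_of_one_lt₀ (by linarith)) two_ne_zero
  have hsum := (hasSum_pow_natAbs hq).div_const (√(1 + lam ^ 2) / |lam|)
  rw [one_add_inv_sq_div_one_sub_inv_sq (by positivity) hb hab, div_self (by positivity)] at hsum
  simp_rw [← magneticEigenfunction_sq] at hsum
  exact ⟨hsum.summable, hsum.tsum_eq⟩
end

section
/- Let λ > 0 and define h_λ on ℓ²(ℤ) by (h_λ f)(x) = (f(x-1)+f(x+1))/2 + λ δ_{x0} f(0). Then the function f_λ(x) = e^{-α_λ|x|}/ν_λ with α_λ = log(√(1+λ²)+λ) satisfies h_λ f_λ = √(1+λ²) · f_λ. -/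
noncomputable def eigenfun (lam : ℝ) (x : ℤ) : ℝ :=
  Real.exp (-(Real.log (Real.sqrt (1 + lam ^ 2) + lam)) * |x|) /
    Real.sqrt (Real.sqrt (1 + lam ^ 2) / lam)

/-!
Write `a = α_λ = log (√(1+λ²) + λ) = arsinh λ`. Away from the origin the two neighbours of
`x ↦ e^{-a|x|}` carry `e^{±a}` times its value, so it is an eigenfunction of the discrete
Laplacian with eigenvalue `cosh a = √(1+λ²)`. At the origin both neighbours carry `e^{-a}`, and
the deficit `cosh a - e^{-a} = sinh a = λ` is exactly what the point mass supplies. The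
normalisation `ν_λ` plays no role, as the equation is linear.
-/

open Real

noncomputable def twoSidedExp (a : ℝ) (x : ℤ) : ℝ := exp (-a * |x|)

lemma twoSidedExp_sub_one_add_twoSidedExp_add_one (a : ℝ) {x : ℤ} (hx : x ≠ 0) :
    twoSidedExp a (x - 1) + twoSidedExp a (x + 1) = 2 * cosh a * twoSidedExp a x := by
  have hneighbours : (|x - 1| = |x| - 1 ∧ |x + 1| = |x| + 1) ∨
      (|x - 1| = |x| + 1 ∧ |x + 1| = |x| - 1) := by
    rcases lt_or_gt_of_ne hx with hneg | hpos
    · right; rw [abs_of_neg hneg, abs_of_neg (by omega), abs_of_nonpos (by omega)]; omega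
    · left; rw [abs_of_pos hpos, abs_of_nonneg (by omega), abs_of_pos (by omega)]; omega
  simp only [twoSidedExp, cosh_eq]
  rcases hneighbours with ⟨hl, hr⟩ | ⟨hl, hr⟩ <;>
  · rw [hl, hr]
    push_cast
    rw [mul_sub, mul_add, mul_one, exp_sub, exp_add, neg_mul, exp_neg a, div_inv_eq_mul]
    ring

lemma twoSidedExp_eigen (a : ℝ) (x : ℤ) :
    (twoSidedExp a (x - 1) + twoSidedExp a (x + 1)) / 2 +
      sinh a * (if x = 0 then twoSidedExp a 0 else 0) = cosh a * twoSidedExp a x := by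
  by_cases hx : x = 0
  · subst hx
    have hleft : twoSidedExp a (0 - 1) = exp (-a) := by simp [twoSidedExp]
    have hright : twoSidedExp a (0 + 1) = exp (-a) := by simp [twoSidedExp]
    have hcentre : twoSidedExp a 0 = 1 := by simp [twoSidedExp]
    rw [hleft, hright, hcentre, if_pos rfl, ← cosh_sub_sinh]
    ring
  · rw [twoSidedExp_sub_one_add_twoSidedExp_add_one a hx, if_neg hx]
    ring

lemma eigenfun_eq_twoSidedExp_div (lam : ℝ) (x : ℤ) :
    eigenfun lam x = twoSidedExp (arsinh lam) x / √(√(1 + lam ^ 2) / lam) := by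
  rw [eigenfun, twoSidedExp, arsinh, add_comm]

theorem magnetic_eigenvalue_equation_general (lam : ℝ) (x : ℤ) :
    (eigenfun lam (x - 1) + eigenfun lam (x + 1)) / 2 +
      lam * (if x = 0 then eigenfun lam 0 else 0) =
    Real.sqrt (1 + lam ^ 2) * eigenfun lam x := by
  have h := twoSidedExp_eigen (arsinh lam) x
  rw [sinh_arsinh, cosh_arsinh] at h
  simp only [eigenfun_eq_twoSidedExp_div]
  split_ifs at h ⊢ <;> linear_combination h / √(√(1 + lam ^ 2) / lam)

theorem magnetic_eigenvalue_equation (lam : ℝ) (hlam : 0 < lam) (x : ℤ) :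
    (eigenfun lam (x - 1) + eigenfun lam (x + 1)) / 2 +
      lam * (if x = 0 then eigenfun lam 0 else 0) =
    Real.sqrt (1 + lam ^ 2) * eigenfun lam x :=
  magnetic_eigenvalue_equation_general lam x
end

section
/- Let 0 < β_L < β_R and λ ∈ ℝ. Define J_λ := (1/2)·(1/2π)·∫_{-π}^{π} j(cos k)·Δ_λ(cos k) dk, with j(e) = e√(1-e²)(ρ_{β_L}(e)-ρ_{β_R}(e)), Δ_λ(e) = (1-e²)/(1-e²+λ²) for λ≠0 and Δ_0 = 1. Then J_λ > 0. -/
open Real intervalIntegral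

noncomputable def planckDensity (r e : ℝ) : ℝ := 1 / (1 + Real.exp (r * e))

noncomputable def fluxDensity (βL βR e : ℝ) : ℝ :=
  e * Real.sqrt (1 - e ^ 2) * (planckDensity βL e - planckDensity βR e)

noncomputable def magneticCorrection (lam e : ℝ) : ℝ :=
  if lam = 0 then 1 else (1 - e ^ 2) / (1 - e ^ 2 + lam ^ 2)

noncomputable def heatFlux (βL βR lam : ℝ) : ℝ :=
  (1 / (4 * Real.pi)) *
    ∫ k in (-Real.pi)..Real.pi, fluxDensity βL βR (Real.cos k) * magneticCorrection lam (Real.cos k)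

/-!
For `βL < βR` the factor `e * (ρ_{βL}(e) - ρ_{βR}(e))` is nonnegative for every energy `e`,
since `ρ_r(e)` decreases in `r * e`; it is strictly positive for `e ≠ 0`. The remaining factors
are nonnegative on `[-1, 1]` and positive on `(-1, 1)`. Hence the integrand is continuous and
nonnegative, and strictly positive for `k ∈ (0, π/2)`, where `cos k ∈ (0, 1)`.
-/

open Set MeasureTheory

theorem intervalIntegral_pos_of_nonneg_of_pos_on_Ioo {f : ℝ → ℝ} {a b c d : ℝ}
    (hfi : IntervalIntegrable f volume a d) (hnonneg : ∀ x ∈ Icc a d, 0 ≤ f x)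
    (hab : a ≤ b) (hbc : b < c) (hcd : c ≤ d) (hpos : ∀ x ∈ Ioo b c, 0 < f x) :
    0 < ∫ x in a..d, f x := by
  have had : a ≤ d := by linarith
  have h₀ : 0 ≤ᵐ[volume.restrict (uIoc a d)] f := by
    rw [uIoc_of_le had]
    exact ae_restrict_of_forall_mem measurableSet_Ioc
      fun x hx => hnonneg x (Ioc_subset_Icc_self hx)
  have hsupp : Ioo b c ⊆ Function.support f ∩ Ioc a d := fun x hx =>
    ⟨(hpos x hx).ne', by linarith [hx.1], by linarith [hx.2]⟩
  rw [integral_pos_iff_support_of_nonneg_ae' h₀ hfi]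
  exact ⟨by linarith, ((Measure.measure_Ioo_pos _).mpr hbc).trans_le (measure_mono hsupp)⟩

theorem planckDensity_le_iff {r s e : ℝ} :
    planckDensity r e ≤ planckDensity s e ↔ s * e ≤ r * e := by
  rw [planckDensity, planckDensity, one_div_le_one_div (by positivity) (by positivity),
    add_le_add_iff_left, exp_le_exp]

theorem planckDensity_lt_iff {r s e : ℝ} :
    planckDensity r e < planckDensity s e ↔ s * e < r * e := by
  rw [planckDensity, planckDensity, one_div_lt_one_div (by positivity) (by positivity),
    add_lt_add_iff_left, exp_lt_exp]

theorem continuous_planckDensity (r : ℝ) : Continuous (planckDensity r) :=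
  continuous_const.div (by fun_prop) fun e => by positivity

section fluxDensity

variable {βL βR : ℝ}

theorem mul_planckDensity_sub_nonneg (hLR : βL ≤ βR) (e : ℝ) :
    0 ≤ e * (planckDensity βL e - planckDensity βR e) := by
  rcases le_total 0 e with he | he
  · exact mul_nonneg he (sub_nonneg.2 (planckDensity_le_iff.2 (by nlinarith)))
  · exact mul_nonneg_of_nonpos_of_nonpos he (sub_nonpos.2 (planckDensity_le_iff.2 (by nlinarith)))

theorem fluxDensity_nonneg (hLR : βL ≤ βR) (e : ℝ) : 0 ≤ fluxDensity βL βR e := by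
  rw [fluxDensity, mul_right_comm]
  exact mul_nonneg (mul_planckDensity_sub_nonneg hLR e) (sqrt_nonneg _)

theorem fluxDensity_pos (hLR : βL < βR) {e : ℝ} (he : e ∈ Ioo 0 1) : 0 < fluxDensity βL βR e := by
  have hsqrt : 0 < sqrt (1 - e ^ 2) := sqrt_pos.2 (by nlinarith [he.1, he.2])
  have hρ : 0 < planckDensity βL e - planckDensity βR e :=
    sub_pos.2 (planckDensity_lt_iff.2 (by nlinarith [he.1]))
  exact mul_pos (mul_pos he.1 hsqrt) hρ

theorem continuous_fluxDensity : Continuous (fluxDensity βL βR) :=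
  (continuous_id.mul (continuous_const.sub (continuous_pow 2)).sqrt).mul
    ((continuous_planckDensity βL).sub (continuous_planckDensity βR))

end fluxDensity

section magneticCorrection

variable (lam : ℝ) {e : ℝ}

theorem magneticCorrection_nonneg (he : e ∈ Icc (-1) 1) : 0 ≤ magneticCorrection lam e := by
  have h : 0 ≤ 1 - e ^ 2 := by nlinarith [he.1, he.2]
  unfold magneticCorrection
  split_ifs
  · exact zero_le_one
  · positivity

theorem magneticCorrection_pos (he : e ∈ Ioo (-1) 1) : 0 < magneticCorrection lam e := by
  have h : 0 < 1 - e ^ 2 := by nlinarith [he.1, he.2]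
  unfold magneticCorrection
  split_ifs
  · exact zero_lt_one
  · positivity

theorem continuousOn_magneticCorrection : ContinuousOn (magneticCorrection lam) (Icc (-1) 1) := by
  unfold magneticCorrection
  split_ifs with hlam
  · exact continuousOn_const
  · refine ContinuousOn.div (by fun_prop) (by fun_prop) fun e he => ?_
    have : 0 < lam ^ 2 := by positivity
    nlinarith [he.1, he.2]

end magneticCorrection

theorem cos_mem_Ioo_zero_one {k : ℝ} (hk : k ∈ Ioo 0 (π / 2)) : cos k ∈ Ioo 0 1 :=
  ⟨cos_pos_of_mem_Ioo ⟨by linarith [hk.1, pi_pos], hk.2⟩,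
    cos_zero ▸ cos_lt_cos_of_nonneg_of_le_pi le_rfl (by linarith [hk.2, pi_pos]) hk.1⟩

theorem heatFlux_pos_general (βL βR : ℝ) (hLR : βL < βR) (lam : ℝ) :
    0 < heatFlux βL βR lam := by
  have hcont : Continuous fun k => fluxDensity βL βR (cos k) * magneticCorrection lam (cos k) :=
    (continuous_fluxDensity.comp continuous_cos).mul
      ((continuousOn_magneticCorrection lam).comp_continuous continuous_cos cos_mem_Icc)
  have hnonneg (k : ℝ) : 0 ≤ fluxDensity βL βR (cos k) * magneticCorrection lam (cos k) :=
    mul_nonneg (fluxDensity_nonneg hLR.le _) (magneticCorrection_nonneg lam (cos_mem_Icc k))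
  have hpos (k : ℝ) (hk : k ∈ Ioo 0 (π / 2)) :
      0 < fluxDensity βL βR (cos k) * magneticCorrection lam (cos k) := by
    have hcos := cos_mem_Ioo_zero_one hk
    exact mul_pos (fluxDensity_pos hLR hcos)
      (magneticCorrection_pos lam ⟨by linarith [hcos.1], hcos.2⟩)
  refine mul_pos (by positivity) ?_
  exact intervalIntegral_pos_of_nonneg_of_pos_on_Ioo (hcont.intervalIntegrable _ _)
    (fun k _ => hnonneg k) (by linarith [pi_pos]) (by linarith [pi_pos]) (by linarith [pi_pos])
    hpos

theorem heatFlux_pos (βL βR : ℝ) (hL : 0 < βL) (hLR : βL < βR) (lam : ℝ) :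
    0 < heatFlux βL βR lam :=
  heatFlux_pos_general βL βR hLR lam
end

section
/- With J_λ the heat flux as above and 0 < β_L < β_R, the entropy production rate σ_λ := (β_R - β_L)·J_λ is strictly positive for every λ ∈ ℝ. -/
open Real intervalIntegral

lemma one_add_exp_pos (x : ℝ) : 0 < 1 + Real.exp x := by positivity

lemma planck_diff (βL βR e : ℝ) :
    planckDensity βL e - planckDensity βR e
      = (Real.exp (βR * e) - Real.exp (βL * e)) /
        ((1 + Real.exp (βL * e)) * (1 + Real.exp (βR * e))) := by
  have h1 := (one_add_exp_pos (βL * e)).ne'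
  have h2 := (one_add_exp_pos (βR * e)).ne'
  rw [planckDensity, planckDensity, div_sub_div _ _ h1 h2]
  ring

lemma flux_nonneg (βL βR : ℝ) (hLR : βL ≤ βR) (e : ℝ) : 0 ≤ fluxDensity βL βR e := by
  have key : 0 ≤ e * (planckDensity βL e - planckDensity βR e) := by
    rw [planck_diff]
    rcases le_total 0 e with he | he
    · apply mul_nonneg he
      apply div_nonneg
      · have h : βL * e ≤ βR * e := mul_le_mul_of_nonneg_right hLR he
        linarith [Real.exp_le_exp.2 h]
      · positivity
    · have hd : (Real.exp (βR * e) - Real.exp (βL * e)) /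
          ((1 + Real.exp (βL * e)) * (1 + Real.exp (βR * e))) ≤ 0 := by
        apply div_nonpos_of_nonpos_of_nonneg
        · have h : βR * e ≤ βL * e := mul_le_mul_of_nonpos_right hLR he
          linarith [Real.exp_le_exp.2 h]
        · positivity
      nlinarith [mul_nonneg (neg_nonneg.2 he) (neg_nonneg.2 hd)]
  have : fluxDensity βL βR e
      = Real.sqrt (1 - e ^ 2) * (e * (planckDensity βL e - planckDensity βR e)) := by
    unfold fluxDensity; ring
  rw [this]
  exact mul_nonneg (Real.sqrt_nonneg _) key

lemma flux_pos (βL βR : ℝ) (hLR : βL < βR) (e : ℝ) (he0 : 0 < e) (he1 : e < 1) :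
    0 < fluxDensity βL βR e := by
  have key : 0 < e * (planckDensity βL e - planckDensity βR e) := by
    rw [planck_diff]
    apply mul_pos he0
    apply div_pos
    · have h : βL * e < βR * e := mul_lt_mul_of_pos_right hLR he0
      linarith [Real.exp_lt_exp.2 h]
    · positivity
  have hs : 0 < Real.sqrt (1 - e ^ 2) := Real.sqrt_pos.2 (by nlinarith)
  have : fluxDensity βL βR e
      = Real.sqrt (1 - e ^ 2) * (e * (planckDensity βL e - planckDensity βR e)) := by
    unfold fluxDensity; ring
  rw [this]
  exact mul_pos hs key

lemma mag_nonneg (lam e : ℝ) (he : e ^ 2 ≤ 1) : 0 ≤ magneticCorrection lam e := by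
  unfold magneticCorrection
  split
  · norm_num
  · exact div_nonneg (by linarith) (by nlinarith [sq_nonneg lam])

lemma mag_pos (lam e : ℝ) (he : e ^ 2 < 1) : 0 < magneticCorrection lam e := by
  unfold magneticCorrection
  split
  · norm_num
  · exact div_pos (by linarith) (by nlinarith [sq_nonneg lam])

lemma cont_integrand (βL βR lam : ℝ) :
    Continuous (fun k => fluxDensity βL βR (Real.cos k) * magneticCorrection lam (Real.cos k)) := by
  have hplanck : ∀ r : ℝ, Continuous (fun k => planckDensity r (Real.cos k)) := by
    intro r
    apply Continuous.div continuous_const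
    · fun_prop
    · intro k; exact (one_add_exp_pos _).ne'
  have hflux : Continuous (fun k => fluxDensity βL βR (Real.cos k)) := by
    unfold fluxDensity
    exact ((continuous_cos.mul (by fun_prop)).mul ((hplanck βL).sub (hplanck βR)))
  apply hflux.mul
  by_cases h : lam = 0
  · simp only [magneticCorrection, h, if_true]
    exact continuous_const
  · simp only [magneticCorrection, h, if_false]
    apply Continuous.div (by fun_prop) (by fun_prop)
    intro k
    have h1 : Real.cos k ^ 2 ≤ 1 := Real.cos_sq_le_one k
    have h2 : 0 < lam ^ 2 := by positivity
    nlinarith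

theorem entropy_production_pos (βL βR : ℝ) (hL : 0 < βL) (hLR : βL < βR) (lam : ℝ) :
    0 < (βR - βL) * heatFlux βL βR lam := by
  have hπ := Real.pi_pos
  set f : ℝ → ℝ := fun k => fluxDensity βL βR (Real.cos k) * magneticCorrection lam (Real.cos k)
    with hf
  have hcont : Continuous f := cont_integrand βL βR lam
  have hnonneg : ∀ k : ℝ, 0 ≤ f k := fun k =>
    mul_nonneg (flux_nonneg βL βR hLR.le _) (mag_nonneg lam _ (Real.cos_sq_le_one k))
  have h1 : 0 ≤ ∫ k in (-Real.pi)..0, f k :=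
    intervalIntegral.integral_nonneg (by linarith) (fun k _ => hnonneg k)
  have h3 : 0 ≤ ∫ k in (Real.pi / 2)..Real.pi, f k :=
    intervalIntegral.integral_nonneg (by linarith) (fun k _ => hnonneg k)
  have h2 : 0 < ∫ k in (0:ℝ)..(Real.pi / 2), f k := by
    apply intervalIntegral.intervalIntegral_pos_of_pos_on (hcont.intervalIntegrable _ _)
    · intro x hx
      have hc1 : 0 < Real.cos x :=
        Real.cos_pos_of_mem_Ioo ⟨by linarith [hx.1], hx.2⟩
      have hc2 : Real.cos x < 1 := by
        have := Real.strictAntiOn_cos (Set.mem_Icc.2 ⟨le_refl 0, hπ.le⟩)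
          (Set.mem_Icc.2 ⟨hx.1.le, by linarith [hx.2]⟩) hx.1
        simpa using this
      exact mul_pos (flux_pos βL βR hLR _ hc1 hc2) (mag_pos lam _ (by nlinarith))
    · linarith
  have hsplit1 : (∫ k in (-Real.pi)..(Real.pi / 2), f k)
      = (∫ k in (-Real.pi)..0, f k) + ∫ k in (0:ℝ)..(Real.pi / 2), f k :=
    (intervalIntegral.integral_add_adjacent_intervals (hcont.intervalIntegrable _ _)
      (hcont.intervalIntegrable _ _)).symm
  have hsplit2 : (∫ k in (-Real.pi)..Real.pi, f k)
      = (∫ k in (-Real.pi)..(Real.pi / 2), f k) + ∫ k in (Real.pi / 2)..Real.pi, f k :=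
    (intervalIntegral.integral_add_adjacent_intervals (hcont.intervalIntegrable _ _)
      (hcont.intervalIntegrable _ _)).symm
  have hI : 0 < ∫ k in (-Real.pi)..Real.pi, f k := by
    rw [hsplit2, hsplit1]; linarith
  have hheat : 0 < heatFlux βL βR lam := by
    unfold heatFlux
    exact mul_pos (by positivity) hI
  exact mul_pos (by linarith) hheat
end

section
/- Let δ > 0, β > 0 and define f : [0,1] → ℝ by f(x) = sinh(δ√(1-x²))/(cosh(δ√(1-x²)) + cosh(β√(1-x²))). Then for all t ∈ [0,1), |f'(t)| ≤ c·t/√(1-t²), where c = [δ + δ·cosh(δ)cosh(β) + β·sinh(δ)sinh(β)]/4. -/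
/-! Write `f = g ∘ φ` with `φ x = √(1 - x²)` and `g s = sinh (δ s) / (cosh (δ s) + cosh (β s))`.
Using `cosh² - sinh² = 1`, the quotient rule gives `g' = N / D²` with
`N s = δ + δ cosh (δ s) cosh (β s) - β sinh (δ s) sinh (β s)` and `D ≥ 2`, while `φ' t = -t / √(1 - t²)`.
On `0 ≤ s ≤ 1` the two signed terms of `N` are bounded by their values at `s = 1`, so `|N| ≤ 4c`. -/

open Real

noncomputable def tempFactor (δ β x : ℝ) : ℝ :=
  Real.sinh (δ * Real.sqrt (1 - x ^ 2)) /
    (Real.cosh (δ * Real.sqrt (1 - x ^ 2)) + Real.cosh (β * Real.sqrt (1 - x ^ 2)))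

noncomputable def tempProfile (δ β s : ℝ) : ℝ :=
  sinh (δ * s) / (cosh (δ * s) + cosh (β * s))

theorem tempFactor_eq_comp (δ β : ℝ) :
    tempFactor δ β = tempProfile δ β ∘ fun x => √(1 - x ^ 2) :=
  rfl

theorem hasDerivAt_sqrt_one_sub_sq {t : ℝ} (ht : t ^ 2 < 1) :
    HasDerivAt (fun x : ℝ => √(1 - x ^ 2)) (-(t / √(1 - t ^ 2))) t := by
  refine (((hasDerivAt_pow 2 t).const_sub 1).sqrt (sub_ne_zero.mpr ht.ne')).congr_deriv ?_
  field_simp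
  norm_num

theorem two_le_cosh_add_cosh (x y : ℝ) : 2 ≤ cosh x + cosh y := by
  linarith [one_le_cosh x, one_le_cosh y]

theorem hasDerivAt_tempProfile (δ β s : ℝ) :
    HasDerivAt (tempProfile δ β)
      ((δ + δ * cosh (δ * s) * cosh (β * s) - β * sinh (δ * s) * sinh (β * s)) /
        (cosh (δ * s) + cosh (β * s)) ^ 2) s := by
  have hδ : HasDerivAt (fun y => δ * y) δ s := by simpa using (hasDerivAt_id s).const_mul δ
  have hβ : HasDerivAt (fun y => β * y) β s := by simpa using (hasDerivAt_id s).const_mul β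
  refine (hδ.sinh.div (hδ.cosh.add hβ.cosh)
    (two_le_cosh_add_cosh _ _ |>.trans_lt' two_pos).ne').congr_deriv ?_
  simp only [Pi.add_apply]
  congr 1
  linear_combination δ * cosh_sq_sub_sinh_sq (δ * s)

theorem cosh_mul_le_cosh (a : ℝ) {s : ℝ} (hs₀ : 0 ≤ s) (hs₁ : s ≤ 1) : cosh (a * s) ≤ cosh a := by
  rw [cosh_le_cosh, abs_mul, abs_of_nonneg hs₀]
  exact mul_le_of_le_one_right (abs_nonneg a) hs₁

theorem sinh_mul_le_sinh {a s : ℝ} (ha : 0 ≤ a) (hs : s ≤ 1) : sinh (a * s) ≤ sinh a :=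
  sinh_le_sinh.mpr (mul_le_of_le_one_right ha hs)

theorem abs_tempProfile_numerator_le {δ β s : ℝ} (hδ : 0 ≤ δ) (hβ : 0 ≤ β)
    (hs₀ : 0 ≤ s) (hs₁ : s ≤ 1) :
    |δ + δ * cosh (δ * s) * cosh (β * s) - β * sinh (δ * s) * sinh (β * s)| ≤
      δ + δ * cosh δ * cosh β + β * sinh δ * sinh β := by
  have hsδ : 0 ≤ sinh (δ * s) := sinh_nonneg_iff.mpr (mul_nonneg hδ hs₀)
  have hsβ : 0 ≤ sinh (β * s) := sinh_nonneg_iff.mpr (mul_nonneg hβ hs₀)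
  have hcosh : cosh (δ * s) * cosh (β * s) ≤ cosh δ * cosh β :=
    mul_le_mul (cosh_mul_le_cosh δ hs₀ hs₁) (cosh_mul_le_cosh β hs₀ hs₁)
      (cosh_pos _).le (cosh_pos _).le
  have hsinh : sinh (δ * s) * sinh (β * s) ≤ sinh δ * sinh β :=
    mul_le_mul (sinh_mul_le_sinh hδ hs₁) (sinh_mul_le_sinh hβ hs₁) hsβ
      (hsδ.trans (sinh_mul_le_sinh hδ hs₁))
  have hcosh₀ : 0 ≤ cosh (δ * s) * cosh (β * s) := by positivity
  have hsinh₀ : 0 ≤ sinh (δ * s) * sinh (β * s) := mul_nonneg hsδ hsβ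
  rw [abs_le]
  constructor <;> linarith [mul_le_mul_of_nonneg_left hcosh hδ, mul_le_mul_of_nonneg_left hsinh hβ,
    mul_nonneg hδ hcosh₀, mul_nonneg hβ hsinh₀]

theorem tempFactor_deriv_bound (δ β : ℝ) (hδ : 0 < δ) (hβ : 0 < β)
    (t : ℝ) (ht : t ∈ Set.Ico (0 : ℝ) 1) (d : ℝ)
    (hd : HasDerivAt (tempFactor δ β) d t) :
    |d| ≤ ((δ + δ * Real.cosh δ * Real.cosh β + β * Real.sinh δ * Real.sinh β) / 4) *
      t / Real.sqrt (1 - t ^ 2) := by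
  obtain ⟨ht₀, ht₁⟩ := ht
  have ht_sq : t ^ 2 < 1 := by nlinarith
  set s := √(1 - t ^ 2)
  have hs₀ : 0 < s := sqrt_pos.mpr (by linarith)
  have hs₁ : s ≤ 1 := sqrt_le_one.mpr (sub_le_self 1 (sq_nonneg t))
  have hD : 4 ≤ (cosh (δ * s) + cosh (β * s)) ^ 2 := by
    nlinarith [two_le_cosh_add_cosh (δ * s) (β * s)]
  have hN := abs_tempProfile_numerator_le hδ.le hβ.le hs₀.le hs₁
  rw [hd.unique (tempFactor_eq_comp δ β ▸
    (hasDerivAt_tempProfile δ β s).comp t (hasDerivAt_sqrt_one_sub_sq ht_sq)),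
    abs_mul, abs_neg, abs_div, abs_div, abs_of_nonneg ht₀, abs_of_pos hs₀, abs_sq,
    mul_div_assoc]
  gcongr
end

section
/- Let δ, β > 0 and f(x) = sinh(δ√(1-x²))/(cosh(δ√(1-x²))+cosh(β√(1-x²))) on [0,1]. Then |f(x) - f(0)| ≤ c·x²/(1+√(1-x²)) for all x ∈ [0,1], with c = [δ + δcosh(δ)cosh(β) + βsinh(δ)sinh(β)]/4. -/
open Real Set

noncomputable section

namespace TempFactor

variable {δ β t : ℝ}

def ratio (δ β t : ℝ) : ℝ := sinh (δ * t) / (cosh (δ * t) + cosh (β * t))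

def ratioDeriv (δ β t : ℝ) : ℝ :=
  (δ + δ * cosh (δ * t) * cosh (β * t) - β * sinh (δ * t) * sinh (β * t)) /
    (cosh (δ * t) + cosh (β * t)) ^ 2

theorem tempFactor_eq_ratio (x : ℝ) : tempFactor δ β x = ratio δ β (√(1 - x ^ 2)) := rfl

theorem tempFactor_zero : tempFactor δ β 0 = ratio δ β 1 := by
  simp [tempFactor_eq_ratio]

theorem hasDerivAt_ratio (δ β t : ℝ) : HasDerivAt (ratio δ β) (ratioDeriv δ β t) t := by
  have hδ : HasDerivAt (fun s => δ * s) δ t := by simpa using (hasDerivAt_id t).const_mul δ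
  have hβ : HasDerivAt (fun s => β * s) β t := by simpa using (hasDerivAt_id t).const_mul β
  refine (hδ.sinh.div (hδ.cosh.add hβ.cosh)
    (add_pos (cosh_pos _) (cosh_pos _)).ne').congr_deriv ?_
  rw [ratioDeriv, Pi.add_apply]
  congr 1
  linear_combination δ * cosh_sq (δ * t)

theorem cosh_mul_le_cosh (hδ : 0 ≤ δ) (ht : t ∈ Icc 0 1) : cosh (δ * t) ≤ cosh δ := by
  rw [cosh_le_cosh, abs_of_nonneg (mul_nonneg hδ ht.1), abs_of_nonneg hδ]
  exact mul_le_of_le_one_right hδ ht.2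

theorem sinh_mul_le_sinh (hδ : 0 ≤ δ) (ht : t ∈ Icc 0 1) : sinh (δ * t) ≤ sinh δ :=
  sinh_le_sinh.2 (mul_le_of_le_one_right hδ ht.2)

theorem sinh_mul_nonneg (hδ : 0 ≤ δ) (ht : t ∈ Icc 0 1) : 0 ≤ sinh (δ * t) :=
  sinh_nonneg_iff.2 (mul_nonneg hδ ht.1)

-- Both terms of the numerator are nonnegative and increase with `t ∈ [0, 1]`.
theorem abs_ratioDeriv_numerator_le (hδ : 0 ≤ δ) (hβ : 0 ≤ β) (ht : t ∈ Icc 0 1) :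
    |δ + δ * cosh (δ * t) * cosh (β * t) - β * sinh (δ * t) * sinh (β * t)| ≤
      δ + δ * cosh δ * cosh β + β * sinh δ * sinh β := by
  have hSδ := sinh_mul_nonneg hδ ht
  have hSβ := sinh_mul_nonneg hβ ht
  calc _ ≤ |δ + δ * cosh (δ * t) * cosh (β * t)| + |β * sinh (δ * t) * sinh (β * t)| :=
        abs_sub _ _
    _ = δ + δ * cosh (δ * t) * cosh (β * t) + β * sinh (δ * t) * sinh (β * t) := by
        rw [abs_of_nonneg (by positivity), abs_of_nonneg (by positivity)]
    _ ≤ δ + δ * cosh δ * cosh β + β * sinh δ * sinh β := by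
        gcongr
        · exact cosh_mul_le_cosh hδ ht
        · exact cosh_mul_le_cosh hβ ht
        · exact sinh_mul_le_sinh hδ ht
        · exact sinh_mul_le_sinh hβ ht

theorem abs_ratioDeriv_le (hδ : 0 ≤ δ) (hβ : 0 ≤ β) (ht : t ∈ Icc 0 1) :
    |ratioDeriv δ β t| ≤ (δ + δ * cosh δ * cosh β + β * sinh δ * sinh β) / 4 := by
  have hden : (4 : ℝ) ≤ (cosh (δ * t) + cosh (β * t)) ^ 2 := by
    nlinarith [one_le_cosh (δ * t), one_le_cosh (β * t)]
  rw [ratioDeriv, abs_div, abs_sq]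
  exact div_le_div₀ (le_trans (abs_nonneg _) (abs_ratioDeriv_numerator_le hδ hβ ht))
    (abs_ratioDeriv_numerator_le hδ hβ ht) (by norm_num) hden

theorem abs_ratio_sub_ratio_one_le (hδ : 0 ≤ δ) (hβ : 0 ≤ β) {u : ℝ} (hu : u ∈ Icc 0 1) :
    |ratio δ β u - ratio δ β 1| ≤
      (δ + δ * cosh δ * cosh β + β * sinh δ * sinh β) / 4 * (1 - u) := by
  have h := (convex_Icc (0 : ℝ) 1).norm_image_sub_le_of_norm_hasDerivWithin_le
    (fun s _ => (hasDerivAt_ratio δ β s).hasDerivWithinAt)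
    (fun s hs => abs_ratioDeriv_le hδ hβ hs) (right_mem_Icc.2 zero_le_one) hu
  rwa [norm_eq_abs, norm_eq_abs, abs_of_nonpos (sub_nonpos.2 hu.2), neg_sub] at h

end TempFactor

end

theorem one_sub_sqrt_one_sub_sq {x : ℝ} (hx : x ^ 2 ≤ 1) :
    1 - √(1 - x ^ 2) = x ^ 2 / (1 + √(1 - x ^ 2)) := by
  have hsq := Real.sq_sqrt (sub_nonneg.2 hx)
  rw [eq_div_iff (by positivity)]
  linear_combination -hsq

open TempFactor in
theorem tempFactor_difference_bound (δ β : ℝ) (hδ : 0 < δ) (hβ : 0 < β)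
    (x : ℝ) (hx : x ∈ Set.Icc (0 : ℝ) 1) :
    |tempFactor δ β x - tempFactor δ β 0| ≤
      ((δ + δ * Real.cosh δ * Real.cosh β + β * Real.sinh δ * Real.sinh β) / 4) *
        x ^ 2 / (1 + Real.sqrt (1 - x ^ 2)) := by
  have hx2 : x ^ 2 ≤ 1 := pow_le_one₀ hx.1 hx.2
  have hu : √(1 - x ^ 2) ∈ Icc (0 : ℝ) 1 :=
    ⟨sqrt_nonneg _, sqrt_le_one.2 (by linarith [sq_nonneg x])⟩
  rw [tempFactor_eq_ratio, tempFactor_zero, mul_div_assoc, ← one_sub_sqrt_one_sub_sq hx2]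
  exact abs_ratio_sub_ratio_one_le hδ.le hβ.le hu
end

section
/- Let δ, β > 0, f(x) = sinh(δ√(1-x²))/(cosh(δ√(1-x²))+cosh(β√(1-x²))), and c = [δ+δcosh(δ)cosh(β)+βsinh(δ)sinh(β)]/4. Then for every λ ≠ 0, |∫_0^1 (f(x)-f(0))·x³/(x²+λ²)² dx| ≤ c. -/
set_option maxHeartbeats 1000000 in
theorem remainder_integral_bound (δ β : ℝ) (hδ : 0 < δ) (hβ : 0 < β)
    (lam : ℝ) (hlam : lam ≠ 0) :
    |∫ x in (0:ℝ)..1, (tempFactor δ β x - tempFactor δ β 0) * x ^ 3 / (x ^ 2 + lam ^ 2) ^ 2| ≤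
      (δ + δ * Real.cosh δ * Real.cosh β + β * Real.sinh δ * Real.sinh β) / 4 := by
  set g : ℝ → ℝ := fun s => Real.sinh (δ * s) / (Real.cosh (δ * s) + Real.cosh (β * s)) with hg
  set g' : ℝ → ℝ := fun s =>
    (δ + δ * Real.cosh (δ * s) * Real.cosh (β * s) - β * Real.sinh (δ * s) * Real.sinh (β * s)) /
      (Real.cosh (δ * s) + Real.cosh (β * s)) ^ 2 with hg'
  set C : ℝ := (δ + δ * Real.cosh δ * Real.cosh β + β * Real.sinh δ * Real.sinh β) / 4 with hC
  have hCnn : 0 ≤ C := by rw [hC]; positivity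
  have hderiv : ∀ s : ℝ, HasDerivAt g (g' s) s := by
    intro s
    have hD : Real.cosh (δ * s) + Real.cosh (β * s) ≠ 0 := by
      have := Real.one_le_cosh (δ * s)
      have := Real.one_le_cosh (β * s)
      positivity
    have h1 : HasDerivAt (fun t => Real.sinh (δ * t)) (Real.cosh (δ * s) * δ) s := by
      simpa using ((hasDerivAt_id s).const_mul δ).sinh
    have h2 : HasDerivAt (fun t => Real.cosh (δ * t) + Real.cosh (β * t))
        (Real.sinh (δ * s) * δ + Real.sinh (β * s) * β) s := by
      have ha : HasDerivAt (fun t => Real.cosh (δ * t)) (Real.sinh (δ * s) * δ) s := by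
        simpa using ((hasDerivAt_id s).const_mul δ).cosh
      have hb : HasDerivAt (fun t => Real.cosh (β * t)) (Real.sinh (β * s) * β) s := by
        simpa using ((hasDerivAt_id s).const_mul β).cosh
      exact ha.add hb
    have h3 := h1.div h2 hD
    have keyeq : δ + δ * Real.cosh (δ * s) * Real.cosh (β * s) -
        β * Real.sinh (δ * s) * Real.sinh (β * s) =
        Real.cosh (δ * s) * δ * (Real.cosh (δ * s) + Real.cosh (β * s)) -
          Real.sinh (δ * s) * (Real.sinh (δ * s) * δ + Real.sinh (β * s) * β) := by
      linear_combination -δ * Real.cosh_sq_sub_sinh_sq (δ * s)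
    rw [hg']
    simp only
    rw [keyeq]
    exact h3
  have hbound : ∀ s ∈ Set.Icc (0:ℝ) 1, ‖g' s‖ ≤ C := by
    intro s hs
    obtain ⟨hs0, hs1⟩ := hs
    have hcd : Real.cosh (δ * s) ≤ Real.cosh δ := by
      rw [Real.cosh_le_cosh, abs_of_nonneg (by positivity), abs_of_nonneg hδ.le]
      nlinarith
    have hcb : Real.cosh (β * s) ≤ Real.cosh β := by
      rw [Real.cosh_le_cosh, abs_of_nonneg (by positivity), abs_of_nonneg hβ.le]
      nlinarith
    have hsd : Real.sinh (δ * s) ≤ Real.sinh δ := Real.sinh_le_sinh.2 (by nlinarith)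
    have hsb : Real.sinh (β * s) ≤ Real.sinh β := Real.sinh_le_sinh.2 (by nlinarith)
    have hsd0 : 0 ≤ Real.sinh (δ * s) := Real.sinh_nonneg_iff.2 (by positivity)
    have hsb0 : 0 ≤ Real.sinh (β * s) := Real.sinh_nonneg_iff.2 (by positivity)
    have hcd1 := Real.one_le_cosh (δ * s)
    have hcb1 := Real.one_le_cosh (β * s)
    have hcd0 : (0:ℝ) ≤ Real.cosh (δ * s) := by linarith
    have hcb0 : (0:ℝ) ≤ Real.cosh (β * s) := by linarith
    have hDen : (4:ℝ) ≤ (Real.cosh (δ * s) + Real.cosh (β * s)) ^ 2 := by nlinarith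
    have f1 : δ * (Real.cosh (δ * s) * Real.cosh (β * s)) ≤
        δ * (Real.cosh δ * Real.cosh β) :=
      mul_le_mul_of_nonneg_left (mul_le_mul hcd hcb hcb0 (by positivity)) hδ.le
    have f2 : β * (Real.sinh (δ * s) * Real.sinh (β * s)) ≤
        β * (Real.sinh δ * Real.sinh β) :=
      mul_le_mul_of_nonneg_left (mul_le_mul hsd hsb hsb0 (by positivity)) hβ.le
    have f3 : 0 ≤ δ * (Real.cosh (δ * s) * Real.cosh (β * s)) := by positivity
    have f4 : 0 ≤ β * (Real.sinh (δ * s) * Real.sinh (β * s)) := by positivity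
    have f5 : 0 ≤ δ * (Real.cosh δ * Real.cosh β) := by positivity
    have f6 : 0 ≤ β * (Real.sinh δ * Real.sinh β) := by positivity
    have hnum : |δ + δ * Real.cosh (δ * s) * Real.cosh (β * s) -
        β * Real.sinh (δ * s) * Real.sinh (β * s)| ≤
        δ + δ * Real.cosh δ * Real.cosh β + β * Real.sinh δ * Real.sinh β := by
      rw [abs_le]
      constructor <;> nlinarith [f1, f2, f3, f4, f5, f6]
    rw [hg', Real.norm_eq_abs, hC]
    simp only
    rw [abs_div, abs_of_nonneg (by positivity : (0:ℝ) ≤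
      (Real.cosh (δ * s) + Real.cosh (β * s)) ^ 2)]
    exact div_le_div₀ (by positivity) hnum (by norm_num) hDen
  have key : ∀ x ∈ Set.uIoc (0:ℝ) 1,
      ‖(tempFactor δ β x - tempFactor δ β 0) * x ^ 3 / (x ^ 2 + lam ^ 2) ^ 2‖ ≤ C := by
    intro x hx
    rw [Set.uIoc_of_le (by norm_num : (0:ℝ) ≤ 1)] at hx
    obtain ⟨hx0, hx1⟩ := hx
    set s : ℝ := Real.sqrt (1 - x ^ 2) with hs
    have hx2 : x ^ 2 ≤ 1 := by nlinarith
    have hs0 : 0 ≤ s := Real.sqrt_nonneg _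
    have hssq : s ^ 2 = 1 - x ^ 2 := Real.sq_sqrt (by linarith)
    have hs1 : s ≤ 1 := by nlinarith
    have hmvt : ‖g s - g 1‖ ≤ C * ‖s - 1‖ :=
      (convex_Icc (0:ℝ) 1).norm_image_sub_le_of_norm_hasDerivWithin_le
        (fun y _ => (hderiv y).hasDerivWithinAt) hbound
        (Set.mem_Icc.2 ⟨zero_le_one, le_refl 1⟩) (Set.mem_Icc.2 ⟨hs0, hs1⟩)
    have hnorm : ‖s - 1‖ = 1 - s := by
      rw [Real.norm_eq_abs, abs_of_nonpos (by linarith)]; ring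
    rw [hnorm, Real.norm_eq_abs] at hmvt
    have hgs : tempFactor δ β x = g s := by
      simp only [tempFactor, hg, hs]
    have hg1 : tempFactor δ β 0 = g 1 := by simp [tempFactor, hg]
    have h1s : 1 - s ≤ x ^ 2 := by nlinarith [mul_nonneg hs0 (sub_nonneg.2 hs1)]
    have hdiff : |g s - g 1| ≤ C * x ^ 2 :=
      hmvt.trans (mul_le_mul_of_nonneg_left h1s hCnn)
    rw [hgs, hg1, Real.norm_eq_abs, abs_div, abs_mul]
    have hden : 0 < (x ^ 2 + lam ^ 2) ^ 2 := by positivity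
    rw [abs_of_nonneg hden.le, abs_of_nonneg (by positivity : (0:ℝ) ≤ x ^ 3),
      div_le_iff₀ hden]
    have h1 : |g s - g 1| * x ^ 3 ≤ C * x ^ 2 * x ^ 3 :=
      mul_le_mul_of_nonneg_right hdiff (by positivity)
    have hx5 : x ^ 5 ≤ (x ^ 2 + lam ^ 2) ^ 2 := by
      nlinarith [sq_nonneg lam, sq_nonneg (x * lam), sq_nonneg (lam ^ 2),
        mul_nonneg (pow_nonneg hx0.le 4) (sub_nonneg.2 hx1)]
    calc |g s - g 1| * x ^ 3 ≤ C * x ^ 2 * x ^ 3 := h1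
      _ = C * x ^ 5 := by ring
      _ ≤ C * (x ^ 2 + lam ^ 2) ^ 2 := mul_le_mul_of_nonneg_left hx5 hCnn
  have hfin := intervalIntegral.norm_integral_le_of_norm_le_const key
  simpa using hfin
end
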